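/- arXiv:1801.06497 — 3 statements merged into one kernel-verified Lean document; each statement's English description precedes it below -/
import Mathlib

section
/- Let ⊑ be a reduction concept on Baire space that extends Turing reducibility and is closed under composition. Then all of the following inclusions hold: B(∈*) ⊆ B(≤*), B(≤*) ⊆ B(≠*), B(≤*) ⊆ D(≤*), B(∈*) ⊆ D(≠*), B(≠*) ⊆ D(∈*), D(≠*) ⊆ D(≤*), D(≤*) ⊆ D(∈*), and every element of D(∈*) is not basic. -/
/-- Partial functions `ℕ →. ℕ` computable relative to an oracle `O : ℕ → ℕ`
(Turing reducibility, defined as in `Nat.Partrec` with an extra oracle clause). -/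
inductive BaireRecursiveIn (O : ℕ → ℕ) : (ℕ →. ℕ) → Prop
  | oracle : BaireRecursiveIn O (fun n => Part.some (O n))
  | zero : BaireRecursiveIn O (pure 0)
  | succ : BaireRecursiveIn O (fun n => Part.some (Nat.succ n))
  | left : BaireRecursiveIn O (fun n : ℕ => Part.some n.unpair.1)
  | right : BaireRecursiveIn O (fun n : ℕ => Part.some n.unpair.2)
  | pair {f g : ℕ →. ℕ} : BaireRecursiveIn O f → BaireRecursiveIn O g →
      BaireRecursiveIn O (fun n => Nat.pair <$> f n <*> g n)
  | comp {f g : ℕ →. ℕ} : BaireRecursiveIn O f → BaireRecursiveIn O g →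
      BaireRecursiveIn O (fun n => g n >>= f)
  | prec {f g : ℕ →. ℕ} : BaireRecursiveIn O f → BaireRecursiveIn O g →
      BaireRecursiveIn O (Nat.unpaired fun a n =>
        n.rec (f a) fun y IH => do let i ← IH; g (Nat.pair a (Nat.pair y i)))
  | rfind {f : ℕ →. ℕ} : BaireRecursiveIn O f →
      BaireRecursiveIn O (fun a => Nat.rfind fun n => (fun m => m = 0) <$> f (Nat.pair a n))

/-- Turing reducibility `f ≤ᵀ g` for total functions on `ℕ`. -/
def TuringLE (f g : ℕ → ℕ) : Prop :=
  BaireRecursiveIn g (fun n => Part.some (f n))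

/-- The constant zero function, the distinguished point `0` of Baire space. -/
def baireZero : ℕ → ℕ := fun _ => 0

section
variable (r : (ℕ → ℕ) → (ℕ → ℕ) → Prop)

/-- `y` is basic (for the reduction concept `⊑` = `r`) if `y ⊑ 0`. -/
def IsBasic (y : ℕ → ℕ) : Prop := r y baireZero

/-- `f ≤* g` : eventual domination. -/
def EvDom (f g : ℕ → ℕ) : Prop := ∃ N, ∀ n ≥ N, f n ≤ g n

/-- `f ≠* g` : eventual difference. -/
def EvDiff (f g : ℕ → ℕ) : Prop := ∃ N, ∀ n ≥ N, f n ≠ g n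

/-- An `h`-slalom: `|σ n| ≤ h n` for all `n`. -/
def IsHSlalom (h : ℕ → ℕ) (σ : ℕ → Finset ℕ) : Prop := ∀ n, (σ n).card ≤ h n

/-- A slalom: `|σ n| ≤ n` for all `n`. -/
def IsSlalom (σ : ℕ → Finset ℕ) : Prop := ∀ n, (σ n).card ≤ n

/-- The real coding a slalom. -/
def slalomCode (σ : ℕ → Finset ℕ) : ℕ → ℕ := fun n => Encodable.encode (σ n)

/-- `f ∈* σ` : `f` is eventually captured by the slalom `σ`. -/
def EvCapt (f : ℕ → ℕ) (σ : ℕ → Finset ℕ) : Prop := ∃ N, ∀ n ≥ N, f n ∈ σ n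

/-- `B(≤*)`: the set of `x` building a real eventually dominating all basic reals. -/
def BLeStar : Set (ℕ → ℕ) := {x | ∃ y, r y x ∧ ∀ z, IsBasic r z → EvDom z y}

/-- `B(≠*)`: the set of `x` building a real eventually different from all basic reals. -/
def BNeStar : Set (ℕ → ℕ) := {x | ∃ y, r y x ∧ ∀ z, IsBasic r z → EvDiff z y}

/-- `B(∈*)`: the set of `x` building a slalom eventually capturing all basic reals. -/
def BInStar : Set (ℕ → ℕ) :=
  {x | ∃ σ : ℕ → Finset ℕ, IsSlalom σ ∧ r (slalomCode σ) x ∧ ∀ z, IsBasic r z → EvCapt z σ}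

/-- `D(≤*)`: the set of `x` building a real not eventually dominated by any basic real. -/
def DLeStar : Set (ℕ → ℕ) := {x | ∃ y, r y x ∧ ∀ z, IsBasic r z → ¬ EvDom y z}

/-- `D(≠*)`: the set of `x` building a real infinitely often equal to every basic real. -/
def DNeStar : Set (ℕ → ℕ) := {x | ∃ y, r y x ∧ ∀ z, IsBasic r z → ¬ EvDiff y z}

/-- `D(∈*)`: the set of `x` building a real not eventually captured by any basic slalom. -/
def DInStar : Set (ℕ → ℕ) :=
  {x | ∃ y, r y x ∧ ∀ σ : ℕ → Finset ℕ, IsSlalom σ → IsBasic r (slalomCode σ) → ¬ EvCapt y σ}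

end

/-! ### Infrastructure: relative computability -/

theorem recIn_of_partrec {O : ℕ → ℕ} {f : ℕ →. ℕ} (h : Nat.Partrec f) : BaireRecursiveIn O f := by
  induction h with
  | zero => exact .zero
  | succ => exact .succ
  | left => exact .left
  | right => exact .right
  | pair _ _ ihf ihg => exact .pair ihf ihg
  | comp _ _ ihf ihg => exact .comp ihf ihg
  | prec _ _ ihf ihg => exact .prec ihf ihg
  | rfind _ ihf => exact .rfind ihf

theorem TuringLE.of_primrec {f : ℕ → ℕ} (h : Primrec f) (O : ℕ → ℕ) : TuringLE f O :=
  recIn_of_partrec (Nat.Partrec.of_primrec (Primrec.nat_iff.mp h))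

theorem TuringLE.oracle (O : ℕ → ℕ) : TuringLE O O := BaireRecursiveIn.oracle

theorem TuringLE.comp {f g O : ℕ → ℕ} (hf : TuringLE f O) (hg : TuringLE g O) :
    TuringLE (fun n => f (g n)) O := by
  have h := BaireRecursiveIn.comp hf hg
  have heq : (fun n => (fun k => Part.some (g k)) n >>= (fun k => Part.some (f k)))
      = fun n => Part.some (f (g n)) := by
    funext n; simp
  rwa [heq] at h

theorem TuringLE.pair {f g O : ℕ → ℕ} (hf : TuringLE f O) (hg : TuringLE g O) :
    TuringLE (fun n => Nat.pair (f n) (g n)) O := by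
  have h := BaireRecursiveIn.pair hf hg
  have heq : (fun n => Nat.pair <$> (fun k => Part.some (f k)) n <*> (fun k => Part.some (g k)) n)
      = fun n => Part.some (Nat.pair (f n) (g n)) := by
    funext n; simp [Seq.seq]
  rwa [heq] at h

theorem TuringLE.prec {f g O : ℕ → ℕ} (hf : TuringLE f O) (hg : TuringLE g O) :
    TuringLE (fun p => Nat.rec (motive := fun _ => ℕ) (f p.unpair.1)
      (fun y ih => g (Nat.pair p.unpair.1 (Nat.pair y ih))) p.unpair.2) O := by
  have h := BaireRecursiveIn.prec hf hg
  have heq : (Nat.unpaired fun a n =>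
        n.rec ((fun k => Part.some (f k)) a) fun y IH => do
          let i ← IH; (fun k => Part.some (g k)) (Nat.pair a (Nat.pair y i)))
      = fun p => Part.some (Nat.rec (motive := fun _ => ℕ) (f p.unpair.1)
          (fun y ih => g (Nat.pair p.unpair.1 (Nat.pair y ih))) p.unpair.2) := by
    funext p
    simp only [Nat.unpaired]
    induction p.unpair.2 with
    | zero => rfl
    | succ n ihn =>
      have hstep : (Nat.rec (Part.some (f p.unpair.1))
          (fun y IH => IH >>= fun i => Part.some (g (Nat.pair p.unpair.1 (Nat.pair y i))))
          (n + 1) : Part ℕ)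
          = (Nat.rec (Part.some (f p.unpair.1))
              (fun y IH => IH >>= fun i => Part.some (g (Nat.pair p.unpair.1 (Nat.pair y i))))
              n : Part ℕ) >>= fun i => Part.some (g (Nat.pair p.unpair.1 (Nat.pair n i))) := rfl
      rw [hstep, ihn]
      simp
  rwa [heq] at h

theorem TuringLE.of_eq {f g O : ℕ → ℕ} (h : TuringLE f O) (he : ∀ n, g n = f n) :
    TuringLE g O := by
  have : g = f := funext he
  rwa [this]

/-! ### Coding infrastructure -/

def headC (v : ℕ) : ℕ := v.pred.unpair.1
def tailC (v : ℕ) : ℕ := v.pred.unpair.2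

def iterTail : ℕ → ℕ → ℕ
  | 0, v => v
  | k + 1, v => tailC (iterTail k v)

def nthC (j v : ℕ) : ℕ := headC (iterTail j v)

theorem encode_list_nil' : Encodable.encode ([] : List ℕ) = 0 := rfl

theorem encode_list_cons' (a : ℕ) (l : List ℕ) :
    Encodable.encode (a :: l) = Nat.succ (Nat.pair a (Encodable.encode l)) := rfl

theorem headC_encode (a : ℕ) (l : List ℕ) : headC (Encodable.encode (a :: l)) = a := by
  simp [headC, encode_list_cons']

theorem tailC_encode (a : ℕ) (l : List ℕ) :
    tailC (Encodable.encode (a :: l)) = Encodable.encode l := by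
  simp [tailC, encode_list_cons']

theorem iterTail_encode (k : ℕ) (L : List ℕ) :
    iterTail k (Encodable.encode L) = Encodable.encode (L.drop k) := by
  induction k with
  | zero => simp [iterTail]
  | succ k ih =>
    rw [iterTail, ih, ← List.drop_drop (i := 1) (j := k) (l := L)]
    rcases L.drop k with _ | ⟨a, l⟩
    · rfl
    · exact tailC_encode a l

theorem nthC_encode (L : List ℕ) (j : ℕ) (h : j < L.length) :
    nthC j (Encodable.encode L) = L[j] := by
  unfold nthC
  rw [iterTail_encode]
  rw [List.drop_eq_getElem_cons h]
  exact headC_encode _ _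

theorem mem_le_encode_list {a : ℕ} {L : List ℕ} (h : a ∈ L) : a ≤ Encodable.encode L := by
  induction L with
  | nil => simp at h
  | cons b l ih =>
    rw [encode_list_cons']
    rcases List.mem_cons.mp h with rfl | h'
    · exact le_trans (Nat.left_le_pair a _) (Nat.le_succ _)
    · exact le_trans (le_trans (ih h') (Nat.right_le_pair b _)) (Nat.le_succ _)

/-! ### Finset coding -/

theorem finset_code_aux (s : Finset ℕ) (rel : ℕ → ℕ → Prop) (i1 : DecidableRel rel)
    (i2 : IsTrans ℕ rel) (i3 : Std.Antisymm rel) (i4 : Std.Total rel)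
    (h : Encodable.encode s = Encodable.encode (@Multiset.sort ℕ s.1 rel i1 i2 i3 i4)) :
    ∃ L : List ℕ, Encodable.encode s = Encodable.encode L ∧
      L.length = s.card ∧ ∀ a, a ∈ L ↔ a ∈ s := by
  haveI := i1; haveI := i2; haveI := i3; haveI := i4
  refine ⟨_, h, ?_, fun a => ?_⟩
  · rw [Multiset.length_sort]; rfl
  · rw [Multiset.mem_sort]; rfl

theorem finset_exists_list (s : Finset ℕ) : ∃ L : List ℕ,
    Encodable.encode s = Encodable.encode L ∧ L.length = s.card ∧ ∀ a, a ∈ L ↔ a ∈ s :=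
  finset_code_aux s _ _ _ _ _ rfl

theorem mem_le_encode_finset {a : ℕ} {s : Finset ℕ} (h : a ∈ s) : a ≤ Encodable.encode s := by
  obtain ⟨L, h1, _, h3⟩ := finset_exists_list s
  rw [h1]
  exact mem_le_encode_list ((h3 a).mpr h)

theorem finset_exists_index {a : ℕ} {s : Finset ℕ} (h : a ∈ s) :
    ∃ j, j < s.card ∧ nthC j (Encodable.encode s) = a := by
  obtain ⟨L, h1, h2, h3⟩ := finset_exists_list s
  obtain ⟨j, hj, hja⟩ := List.mem_iff_getElem.mp ((h3 a).mpr h)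
  exact ⟨j, h2 ▸ hj, by rw [h1, nthC_encode L j hj, hja]⟩

theorem encode_finset_empty : Encodable.encode (∅ : Finset ℕ) = 0 := by
  obtain ⟨L, h1, h2, _⟩ := finset_exists_list ∅
  simp only [Finset.card_empty] at h2
  rw [h1, List.length_eq_zero_iff.mp h2]
  rfl

theorem encode_finset_singleton (a : ℕ) :
    Encodable.encode ({a} : Finset ℕ) = Nat.pair a 0 + 1 := by
  obtain ⟨L, h1, h2, h3⟩ := finset_exists_list {a}
  simp only [Finset.card_singleton] at h2
  rcases L with _ | ⟨b, _ | ⟨c, l⟩⟩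
  · simp at h2
  · have : b = a := by simpa using (h3 b).mp (by simp)
    subst this
    rw [h1, encode_list_cons', encode_list_nil']
  · simp at h2

/-! ### Block coding and reading -/

def goBC (z : ℕ → ℕ) (a : ℕ) (m : ℕ) : ℕ :=
  Nat.rec (motive := fun _ => ℕ) 0 (fun y ih => Nat.succ (Nat.pair (z (Nat.pair a y)) ih)) m

theorem goBC_succ (z : ℕ → ℕ) (a m : ℕ) :
    goBC z a (m + 1) = Nat.succ (Nat.pair (z (Nat.pair a m)) (goBC z a m)) := rfl

def blockCode (z : ℕ → ℕ) (n : ℕ) : ℕ := goBC z n n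

theorem tailC_goBC (z : ℕ → ℕ) (a m : ℕ) : tailC (goBC z a (m + 1)) = goBC z a m := by
  rw [goBC_succ]; simp [tailC]

theorem headC_goBC (z : ℕ → ℕ) (a m : ℕ) : headC (goBC z a (m + 1)) = z (Nat.pair a m) := by
  rw [goBC_succ]; simp [headC]

theorem iterTail_goBC (z : ℕ → ℕ) (a : ℕ) {k n : ℕ} (h : k ≤ n) :
    iterTail k (goBC z a n) = goBC z a (n - k) := by
  induction k with
  | zero => simp [iterTail]
  | succ k ih =>
    rw [iterTail, ih (by omega)]
    rw [show n - k = (n - (k + 1)) + 1 by omega]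
    exact tailC_goBC z a _

theorem read_goBC (z : ℕ → ℕ) {j n : ℕ} (h : j < n) :
    headC (iterTail (n - 1 - j) (goBC z n n)) = z (Nat.pair n j) := by
  rw [iterTail_goBC z n (by omega), show n - (n - 1 - j) = j + 1 by omega]
  exact headC_goBC z n j

/-- the reading function of a slalom code. -/
def readFn (c : ℕ → ℕ) (m : ℕ) : ℕ :=
  headC (iterTail (m.unpair.1 - 1 - m.unpair.2) (nthC m.unpair.2 (c m.unpair.1)))

theorem primrec_headC : Primrec headC :=
  Primrec.fst.comp (Primrec.unpair.comp Primrec.pred)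

theorem primrec_tailC : Primrec tailC :=
  Primrec.snd.comp (Primrec.unpair.comp Primrec.pred)

theorem primrec_iterTail : Primrec₂ iterTail := by
  have h : Primrec (fun p : ℕ × ℕ => Nat.rec (motive := fun _ => ℕ) p.2
      (fun _ ih => tailC ih) p.1) :=
    Primrec.nat_rec' Primrec.fst Primrec.snd
      ((primrec_tailC.comp Primrec.snd).comp₂ Primrec₂.right)
  have heq : ∀ k v : ℕ, iterTail k v =
      Nat.rec (motive := fun _ => ℕ) v (fun _ ih => tailC ih) k := by
    intro k v
    induction k with
    | zero => rfl
    | succ k ih => rw [iterTail, ih]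
  exact h.of_eq fun p => (heq p.1 p.2).symm

theorem primrec_nthC : Primrec₂ nthC :=
  primrec_headC.comp₂ primrec_iterTail

/-- `readFn c` is computable in `c`. -/
theorem turingLE_readFn (c : ℕ → ℕ) : TuringLE (readFn c) c := by
  have hinner : TuringLE (fun m => Nat.pair m (c m.unpair.1)) c :=
    TuringLE.pair (TuringLE.of_primrec Primrec.id c)
      (TuringLE.comp (TuringLE.oracle c)
        (TuringLE.of_primrec (Primrec.fst.comp Primrec.unpair) c))
  have hF : Primrec (fun k : ℕ => headC (iterTail (k.unpair.1.unpair.1 - 1 - k.unpair.1.unpair.2)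
      (nthC k.unpair.1.unpair.2 k.unpair.2))) := by
    have u1 : Primrec (fun k : ℕ => k.unpair.1.unpair.1) :=
      Primrec.fst.comp (Primrec.unpair.comp (Primrec.fst.comp Primrec.unpair))
    have u2 : Primrec (fun k : ℕ => k.unpair.1.unpair.2) :=
      Primrec.snd.comp (Primrec.unpair.comp (Primrec.fst.comp Primrec.unpair))
    have u3 : Primrec (fun k : ℕ => k.unpair.2) := Primrec.snd.comp Primrec.unpair
    exact primrec_headC.comp (primrec_iterTail.comp
      (Primrec.nat_sub.comp (Primrec.nat_sub.comp u1 (Primrec.const 1)) u2)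
      (primrec_nthC.comp u2 u3))
  have h := TuringLE.comp (TuringLE.of_primrec hF c) hinner
  have heq : (fun m => headC (iterTail ((Nat.pair m (c m.unpair.1)).unpair.1.unpair.1 - 1 -
      (Nat.pair m (c m.unpair.1)).unpair.1.unpair.2)
      (nthC (Nat.pair m (c m.unpair.1)).unpair.1.unpair.2 (Nat.pair m (c m.unpair.1)).unpair.2)))
      = readFn c := by
    funext m
    simp [Nat.unpair_pair, readFn]
  rwa [heq] at h

/-- `blockCode z` is computable in `z`. -/
theorem turingLE_blockCode (z : ℕ → ℕ) : TuringLE (blockCode z) z := by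
  have hg : TuringLE (fun t => Nat.succ
      (Nat.pair (z (Nat.pair t.unpair.1 t.unpair.2.unpair.1)) t.unpair.2.unpair.2)) z := by
    have hz : TuringLE (fun t => z (Nat.pair t.unpair.1 t.unpair.2.unpair.1)) z :=
      TuringLE.comp (TuringLE.oracle z) (TuringLE.of_primrec
        (Primrec₂.natPair.comp (Primrec.fst.comp Primrec.unpair)
          (Primrec.fst.comp (Primrec.unpair.comp (Primrec.snd.comp Primrec.unpair)))) z)
    have hr : TuringLE (fun t : ℕ => t.unpair.2.unpair.2) z :=
      TuringLE.of_primrec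
        (Primrec.snd.comp (Primrec.unpair.comp (Primrec.snd.comp Primrec.unpair))) z
    exact TuringLE.comp (TuringLE.of_primrec Primrec.succ z) (TuringLE.pair hz hr)
  have hf : TuringLE (fun _ : ℕ => 0) z := TuringLE.of_primrec (Primrec.const 0) z
  have hP := TuringLE.prec hf hg
  have h := TuringLE.comp hP (TuringLE.pair (TuringLE.of_primrec Primrec.id z)
    (TuringLE.of_primrec Primrec.id z))
  refine TuringLE.of_eq h (fun n => ?_)
  simp only [id_eq, Nat.unpair_pair]
  rfl

/-- Agreement: if the block code of `z` at level `n ≥ 1` lies in `σ n` and `σ` is a slalom,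
then the reading function agrees with `z` at some point `pair n j` with `j < n`. -/
theorem read_agree (σ : ℕ → Finset ℕ) (hσ : IsSlalom σ) (z : ℕ → ℕ) (n : ℕ) (h1 : 1 ≤ n)
    (h2 : blockCode z n ∈ σ n) :
    ∃ j < n, readFn (slalomCode σ) (Nat.pair n j) = z (Nat.pair n j) := by
  obtain ⟨j, hj, hnth⟩ := finset_exists_index h2
  have hjn : j < n := lt_of_lt_of_le hj (hσ n)
  refine ⟨j, hjn, ?_⟩
  show headC (iterTail ((Nat.pair n j).unpair.1 - 1 - (Nat.pair n j).unpair.2)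
    (nthC (Nat.pair n j).unpair.2 (slalomCode σ (Nat.pair n j).unpair.1))) = z (Nat.pair n j)
  rw [Nat.unpair_pair]
  show headC (iterTail (n - 1 - j) (nthC j (Encodable.encode (σ n)))) = z (Nat.pair n j)
  rw [hnth]
  exact read_goBC z hjn

theorem stmt_0 (r : (ℕ → ℕ) → (ℕ → ℕ) → Prop)
    (hrefl : ∀ f, r f f) (htrans : ∀ f g h, r f g → r g h → r f h)
    (hT : ∀ f g, TuringLE f g → r f g)
    (hcomp : ∀ f g h, r f h → r g h → r (f ∘ g) h) :
    BInStar r ⊆ BLeStar r ∧ BLeStar r ⊆ BNeStar r ∧ BLeStar r ⊆ DLeStar r ∧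
      BInStar r ⊆ DNeStar r ∧ BNeStar r ⊆ DInStar r ∧ DNeStar r ⊆ DLeStar r ∧
      DLeStar r ⊆ DInStar r ∧ ∀ x ∈ DInStar r, ¬ IsBasic r x := by
  have basic_of_tle : ∀ {z w : ℕ → ℕ}, IsBasic r z → TuringLE w z → IsBasic r w :=
    fun hz hw => htrans _ _ _ (hT _ _ hw) hz
  have succ_r : ∀ x, r Nat.succ x := fun x => hT _ _ (TuringLE.of_primrec Primrec.succ x)
  refine ⟨?_, ?_, ?_, ?_, ?_, ?_, ?_, ?_⟩
  · -- B(∈*) ⊆ B(≤*)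
    rintro x ⟨σ, hσ, hrc, hcap⟩
    refine ⟨slalomCode σ, hrc, fun z hz => ?_⟩
    obtain ⟨N, hN⟩ := hcap z hz
    exact ⟨N, fun n hn => mem_le_encode_finset (hN n hn)⟩
  · -- B(≤*) ⊆ B(≠*)
    rintro x ⟨y, hy, hdom⟩
    refine ⟨Nat.succ ∘ y, hcomp _ _ _ (succ_r x) hy, fun z hz => ?_⟩
    obtain ⟨N, hN⟩ := hdom z hz
    refine ⟨N, fun n hn => ?_⟩
    have := hN n hn
    simp only [Function.comp_apply]
    omega
  · -- B(≤*) ⊆ D(≤*)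
    rintro x ⟨y, hy, hdom⟩
    refine ⟨y, hy, fun z hz hbad => ?_⟩
    obtain ⟨N1, hN1⟩ := hbad
    have hzb : IsBasic r (Nat.succ ∘ z) := hcomp _ _ _ (succ_r baireZero) hz
    obtain ⟨N2, hN2⟩ := hdom _ hzb
    have h1 := hN1 (max N1 N2) (le_max_left _ _)
    have h2 := hN2 (max N1 N2) (le_max_right _ _)
    simp only [Function.comp_apply] at h2
    omega
  · -- B(∈*) ⊆ D(≠*)
    rintro x ⟨σ, hσ, hrc, hcap⟩
    refine ⟨readFn (slalomCode σ),
      htrans _ _ _ (hT _ _ (turingLE_readFn (slalomCode σ))) hrc, fun z hz hdiff => ?_⟩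
    obtain ⟨N, hN⟩ := hdiff
    obtain ⟨N0, hN0⟩ := hcap (blockCode z) (basic_of_tle hz (turingLE_blockCode z))
    set n := max N0 (max N 1) with hn
    obtain ⟨j, hj, hagree⟩ := read_agree σ hσ z n (le_max_of_le_right (le_max_right _ _))
      (hN0 n (le_max_left _ _))
    have hm : Nat.pair n j ≥ N :=
      le_trans (le_max_of_le_right (le_max_left _ _)) (Nat.left_le_pair n j)
    exact hN (Nat.pair n j) hm hagree
  · -- B(≠*) ⊆ D(∈*)
    rintro x ⟨y, hy, hdiffall⟩
    refine ⟨blockCode y, htrans _ _ _ (hT _ _ (turingLE_blockCode y)) hy,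
      fun σ hσ hbasic hcapt => ?_⟩
    obtain ⟨N0, hN0⟩ := hcapt
    obtain ⟨N, hN⟩ := hdiffall (readFn (slalomCode σ)) (basic_of_tle hbasic (turingLE_readFn _))
    set n := max N0 (max N 1) with hn
    obtain ⟨j, hj, hagree⟩ := read_agree σ hσ y n (le_max_of_le_right (le_max_right _ _))
      (hN0 n (le_max_left _ _))
    have hm : Nat.pair n j ≥ N :=
      le_trans (le_max_of_le_right (le_max_left _ _)) (Nat.left_le_pair n j)
    exact hN (Nat.pair n j) hm hagree
  · -- D(≠*) ⊆ D(≤*)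
    rintro x ⟨y, hy, hio⟩
    refine ⟨y, hy, fun z hz hdom => ?_⟩
    obtain ⟨N, hN⟩ := hdom
    have hzb : IsBasic r (Nat.succ ∘ z) := hcomp _ _ _ (succ_r baireZero) hz
    have h := hio _ hzb
    rw [EvDiff] at h
    push_neg at h
    obtain ⟨n, hn, he⟩ := h N
    have := hN n hn
    simp only [Function.comp_apply] at he
    omega
  · -- D(≤*) ⊆ D(∈*)
    rintro x ⟨y, hy, hunb⟩
    refine ⟨y, hy, fun σ hσ hbasic hcapt => ?_⟩
    obtain ⟨N, hN⟩ := hcapt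
    exact hunb (slalomCode σ) hbasic ⟨N, fun n hn => mem_le_encode_finset (hN n hn)⟩
  · -- D(∈*) contains no basic reals
    rintro x ⟨y, hy, hesc⟩ hxb
    have hyb : IsBasic r y := htrans _ _ _ hy hxb
    set σ : ℕ → Finset ℕ := fun n => if n = 0 then (∅ : Finset ℕ) else {y n} with hσdef
    have hσ : IsSlalom σ := by
      intro n
      rcases n with _ | n
      · simp [σ]
      · simp [σ]
    have hcode : TuringLE (slalomCode σ) y := by
      have hinner : TuringLE (fun n => Nat.pair n (y n)) y :=
        TuringLE.pair (TuringLE.of_primrec Primrec.id y) (TuringLE.oracle y)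
      have hF : Primrec (fun k : ℕ => if k.unpair.1 = 0 then 0 else Nat.pair k.unpair.2 0 + 1) := by
        refine Primrec.ite (Primrec.eq.comp (Primrec.fst.comp Primrec.unpair)
          (Primrec.const 0)) (Primrec.const 0) ?_
        exact Primrec.succ.comp (Primrec₂.natPair.comp (Primrec.snd.comp Primrec.unpair)
          (Primrec.const 0))
      have h := TuringLE.comp (TuringLE.of_primrec hF y) hinner
      refine TuringLE.of_eq h (fun n => ?_)
      simp only [Nat.unpair_pair]
      rcases n with _ | n
      · simp only [if_pos rfl]
        exact encode_finset_empty
      · simp only [if_neg (Nat.succ_ne_zero n)]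
        show Encodable.encode (σ (n + 1)) = _
        rw [hσdef]
        simp only [if_neg (Nat.succ_ne_zero n)]
        exact encode_finset_singleton _
    refine hesc σ hσ (basic_of_tle hyb hcode) ⟨1, fun n hn => ?_⟩
    have : σ n = {y n} := by
      rw [hσdef]
      simp only [if_neg (by omega : ¬ n = 0)]
    rw [this]
    exact Finset.mem_singleton_self _
end

section
/- There exists a projection π from the localization poset LOC to the Hechler poset D. -/
/-- `π : P → Q` is a projection between the partial orders `(P, leP)` and `(Q, leQ)`
with greatest elements `oneP` and `oneQ`. -/
def IsProjection {P Q : Type*} (leP : P → P → Prop) (leQ : Q → Q → Prop)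
    (oneP : P) (oneQ : Q) (π : P → Q) : Prop :=
  (∀ p p' : P, leP p p' → leQ (π p) (π p')) ∧
  π oneP = oneQ ∧
  ∀ (p : P) (q : Q), leQ q (π p) → ∃ p' : P, leP p' p ∧ leQ (π p') q

/-- A condition of the localization forcing `LOC`: a finite sequence `s` of finite
sets of naturals with `|s n| ≤ n`, together with a finite set `F` of functions
with `|F| ≤ |s|`. -/
structure LOCCond where
  s : List (Finset ℕ)
  F : Finset (ℕ → ℕ)
  hs : ∀ n, ∀ _ : n < s.length, (s.getD n ∅).card ≤ n
  hF : F.card ≤ s.length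

/-- The order on `LOC`. -/
def LOCle (t p : LOCCond) : Prop :=
  p.s <+: t.s ∧ p.F ⊆ t.F ∧
    ∀ f ∈ p.F, ∀ n, p.s.length ≤ n → n < t.s.length → f n ∈ t.s.getD n ∅

/-- The greatest element of `LOC`. -/
def LOCone : LOCCond := ⟨[], ∅, by simp, by simp⟩

/-- A condition of Hechler forcing `D`: a finite sequence of naturals (the stem)
together with a function `ℕ → ℕ` (the side condition). -/
structure DCond where
  p : List ℕ
  f : ℕ → ℕ

/-- The order on `D`. -/
def Dle (q p : DCond) : Prop :=
  p.p <+: q.p ∧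
    (∀ n, p.p.length ≤ n → n < q.p.length → p.f n ≤ q.p.getD n 0) ∧
    ∀ n, p.f n ≤ q.f n

/-- The greatest element of `D`. -/
def Done : DCond := ⟨[], fun _ => 0⟩

namespace Stmt12

def colB (F : Finset (ℕ → ℕ)) (j : ℕ) : Finset ℕ := F.image fun f => f j

lemma colB_sup (F : Finset (ℕ → ℕ)) (j : ℕ) :
    (colB F j).sup id = F.sup fun f => f j := by
  unfold colB; rw [Finset.sup_image]; rfl

def colmax (p : LOCCond) (j : ℕ) : ℕ :=
  if j < p.s.length then (p.s.getD j ∅).sup id else p.F.sup fun f => f j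

def Wv (p : LOCCond) (m : ℕ) : ℕ := colmax p (2*m+2) + colmax p (2*m+3)

def Active (p : LOCCond) (m : ℕ) : Prop :=
  2*m+4 ≤ p.s.length ∨
    (p.s.length = 2*m+3 ∧ p.s.length ≤ (colB p.F p.s.length).card)

instance (p : LOCCond) (m : ℕ) : Decidable (Active p m) := by
  unfold Active; infer_instance

def ell (p : LOCCond) : ℕ :=
  (p.s.length - 2)/2 +
    (if p.s.length % 2 = 1 ∧ 3 ≤ p.s.length ∧
        p.s.length ≤ (colB p.F p.s.length).card then 1 else 0)

lemma active_iff (p : LOCCond) (m : ℕ) : Active p m ↔ m < ell p := by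
  unfold Active ell
  split_ifs with h <;> omega

lemma ell_le (p : LOCCond) : (p.s.length - 2)/2 ≤ ell p := Nat.le_add_right _ _

lemma len_le_ell (p : LOCCond) : p.s.length ≤ 2 * ell p + 3 := by
  have := ell_le p; omega

lemma getD_of_prefix {α : Type*} {l1 l2 : List α} (d : α) (h : l1 <+: l2)
    {n : ℕ} (hn : n < l1.length) : l2.getD n d = l1.getD n d := by
  obtain ⟨u, rfl⟩ := h
  exact List.getD_append _ _ _ _ hn

lemma colmax_mono {t p : LOCCond} (h : LOCle t p) (j : ℕ) :
    colmax p j ≤ colmax t j := by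
  obtain ⟨hpre, hsub, hmem⟩ := h
  have hlen : p.s.length ≤ t.s.length := hpre.length_le
  unfold colmax
  by_cases h1 : j < p.s.length
  · rw [if_pos h1, if_pos (lt_of_lt_of_le h1 hlen), getD_of_prefix _ hpre h1]
  · rw [if_neg h1]
    by_cases h2 : j < t.s.length
    · rw [if_pos h2]
      exact Finset.sup_le fun f hf =>
        Finset.le_sup (f := id) (hmem f hf j (le_of_not_gt h1) h2)
    · rw [if_neg h2]
      exact Finset.sup_mono hsub

lemma Wv_mono {t p : LOCCond} (h : LOCle t p) (m : ℕ) : Wv p m ≤ Wv t m :=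
  Nat.add_le_add (colmax_mono h _) (colmax_mono h _)

lemma colmax_frozen_lt {t p : LOCCond} (h : LOCle t p) {j : ℕ}
    (hj : j < p.s.length) : colmax t j = colmax p j := by
  unfold colmax
  rw [if_pos hj, if_pos (lt_of_lt_of_le hj h.1.length_le),
    getD_of_prefix _ h.1 hj]

lemma colmax_forced {t p : LOCCond} (h : LOCle t p)
    (hc : p.s.length ≤ (colB p.F p.s.length).card) :
    colmax t p.s.length = colmax p p.s.length := by
  obtain ⟨hpre, hsub, hmem⟩ := h
  unfold colmax
  rw [if_neg (lt_irrefl _)]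
  by_cases h2 : p.s.length < t.s.length
  · rw [if_pos h2]
    have hcsub : colB p.F p.s.length ⊆ t.s.getD p.s.length ∅ := by
      intro x hx
      obtain ⟨f, hf, rfl⟩ := Finset.mem_image.1 hx
      exact hmem f hf _ le_rfl h2
    have hcard : (t.s.getD p.s.length ∅).card ≤ (colB p.F p.s.length).card :=
      le_trans (t.hs _ h2) hc
    rw [← Finset.eq_of_subset_of_card_le hcsub hcard, colB_sup]
  · rw [if_neg h2]
    have hFF : t.F = p.F := by
      refine (Finset.eq_of_subset_of_card_le hsub ?_).symm
      calc t.F.card ≤ t.s.length := t.hF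
        _ ≤ p.s.length := by omega
        _ ≤ (colB p.F p.s.length).card := hc
        _ ≤ p.F.card := Finset.card_image_le
    rw [hFF]

lemma Wv_frozen {t p : LOCCond} (h : LOCle t p) {m : ℕ} (ha : Active p m) :
    Wv t m = Wv p m := by
  unfold Wv
  rcases ha with h4 | ⟨hl, hc⟩
  · rw [colmax_frozen_lt h (by omega), colmax_frozen_lt h (by omega)]
  · rw [colmax_frozen_lt h (by omega)]
    have h23 : 2*m+3 = p.s.length := hl.symm
    rw [h23, colmax_forced ⟨h.1, h.2.1, h.2.2⟩ hc]

lemma active_mono {t p : LOCCond} (h : LOCle t p) {m : ℕ} (ha : Active p m) :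
    Active t m := by
  have hlen : p.s.length ≤ t.s.length := h.1.length_le
  rcases ha with h4 | ⟨hl, hc⟩
  · exact Or.inl (le_trans h4 hlen)
  · rcases eq_or_lt_of_le hlen with he | hlt
    · refine Or.inr ⟨by omega, ?_⟩
      have hsub : colB p.F p.s.length ⊆ colB t.F p.s.length :=
        Finset.image_subset_image h.2.1
      have := Finset.card_le_card hsub
      have h' : t.s.length = p.s.length := he.symm
      rw [h']
      omega
    · exact Or.inl (by omega)

lemma ell_mono {t p : LOCCond} (h : LOCle t p) : ell p ≤ ell t := by
  by_contra hlt
  push_neg at hlt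
  have h1 : Active p (ell t) := (active_iff _ _).2 hlt
  have h2 := active_mono h h1
  rw [active_iff] at h2
  omega

lemma getD_ofFn {α : Type*} {n : ℕ} (f : Fin n → α) {i : ℕ} (hi : i < n) (d : α) :
    (List.ofFn f).getD i d = f ⟨i, hi⟩ := by
  rw [List.getD_eq_getElem _ _ (by simpa using hi), List.getElem_ofFn]

def proj (p : LOCCond) : DCond :=
  ⟨List.ofFn fun i : Fin (ell p) => Wv p i,
   fun m => Wv p m + if m < ell p then p.F.sup (fun f => f (2*m+2)) else 0⟩

lemma proj_p_length (p : LOCCond) : (proj p).p.length = ell p := by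
  show (List.ofFn fun i : Fin (ell p) => Wv p i).length = ell p
  rw [List.length_ofFn]

lemma proj_p_getD (p : LOCCond) {m : ℕ} (hm : m < ell p) :
    (proj p).p.getD m 0 = Wv p m := by
  show (List.ofFn fun i : Fin (ell p) => Wv p i).getD m 0 = Wv p m
  rw [getD_ofFn _ hm 0]

lemma prefix_helper {l1 l2 : List ℕ} (h : l1 = l2.take l1.length) :
    l1 <+: l2 := by
  rw [h]; exact List.take_prefix _ _

theorem proj_mono {t p : LOCCond} (h : LOCle t p) : Dle (proj t) (proj p) := by
  have hell := ell_mono h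
  refine ⟨?_, ?_, ?_⟩
  · apply prefix_helper
    apply List.ext_getElem
    · simp [proj, hell]
    · intro i h1 h2
      have hi : i < ell p := by simpa [proj] using h1
      simp only [proj, List.getElem_take, List.getElem_ofFn]
      exact (Wv_frozen h ((active_iff _ _).2 hi)).symm
  · intro n hn1 hn2
    rw [proj_p_length] at hn1
    rw [proj_p_length] at hn2
    rw [proj_p_getD _ hn2]
    show Wv p n + (if n < ell p then p.F.sup (fun f => f (2*n+2)) else 0) ≤ Wv t n
    rw [if_neg (by omega)]
    have := Wv_mono h n
    omega
  · intro n
    show Wv p n + (if n < ell p then p.F.sup (fun f => f (2*n+2)) else 0) ≤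
      Wv t n + (if n < ell t then t.F.sup (fun f => f (2*n+2)) else 0)
    by_cases h1 : n < ell p
    · rw [if_pos h1, if_pos (by omega), Wv_frozen h ((active_iff _ _).2 h1)]
      exact Nat.add_le_add_left (Finset.sup_mono h.2.1) _
    · rw [if_neg h1, Nat.add_zero]
      exact le_trans (Wv_mono h n) (Nat.le_add_right _ _)

theorem proj_one : proj LOCone = Done := by
  have he : ell LOCone = 0 := by
    unfold ell
    rw [if_neg]
    · rfl
    · rintro ⟨h1, -⟩
      simp [LOCone] at h1
  have h1 : (proj LOCone).p = [] :=
    List.eq_nil_of_length_eq_zero (by rw [proj_p_length, he])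
  have h2 : ∀ m, (proj LOCone).f m = 0 := by
    intro m
    show Wv LOCone m + _ = 0
    rw [he, if_neg (by omega)]
    unfold Wv colmax
    simp [LOCone]
  show proj LOCone = ⟨[], fun _ => 0⟩
  rw [show ([] : List ℕ) = (proj LOCone).p from h1.symm,
    show (fun _ : ℕ => 0) = (proj LOCone).f from funext fun m => (h2 m).symm]

end Stmt12

namespace Stmt12

theorem proj_proj (p : LOCCond) (q : DCond) (hq : Dle q (proj p)) :
    ∃ p', LOCle p' p ∧ Dle (proj p') q := by
  classical
  obtain ⟨hpre, hmid, hside⟩ := hq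
  have hslen : ell p ≤ q.p.length := by
    rw [← proj_p_length p]; exact hpre.length_le
  set N := max q.p.length (p.s.length + 4) with hN
  have hqN : q.p.length ≤ N := le_max_left _ _
  have hL0N : p.s.length + 4 ≤ N := le_max_right _ _
  -- targets
  set T : ℕ → ℕ := fun m => if m < q.p.length then q.p.getD m 0 else q.f m with hT
  have hprojf : ∀ m, ell p ≤ m → (proj p).f m = Wv p m := by
    intro m hm
    show Wv p m + (if m < ell p then p.F.sup (fun f => f (2*m+2)) else 0) = Wv p m
    rw [if_neg (by omega), Nat.add_zero]
  have hTW : ∀ m, ell p ≤ m → Wv p m ≤ T m := by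
    intro m hm
    by_cases h1 : m < q.p.length
    · have h2 := hmid m (by rw [proj_p_length]; exact hm) h1
      rw [hprojf m hm] at h2
      simpa [hT, h1] using h2
    · have h2 := hside m
      rw [hprojf m hm] at h2
      simpa [hT, h1] using h2
  -- the new side function
  set hfun : ℕ → ℕ := fun j => q.f ((j-2)/2) with hhfun
  -- new columns
  set col : ℕ → Finset ℕ := fun j =>
    if j % 2 = 1 ∧ 2 ≤ j ∧ ¬ Active p ((j-2)/2)
    then insert (T ((j-2)/2) - colmax p (j-1)) (colB p.F j)
    else colB p.F j with hcol
  have hcolB_sub : ∀ j, colB p.F j ⊆ col j := by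
    intro j
    simp only [hcol]
    split_ifs
    · exact Finset.subset_insert _ _
    · exact Finset.Subset.refl _
  set Lnew := 2*N+2 with hLnew
  have hLL : p.s.length ≤ Lnew := by omega
  set ext := List.ofFn (fun i : Fin (Lnew - p.s.length) => col (p.s.length + i)) with hext
  set s' := p.s ++ ext with hs'
  have hs'len : s'.length = Lnew := by
    rw [hs', List.length_append, hext, List.length_ofFn]
    omega
  have hgetD_lt : ∀ j, j < p.s.length → s'.getD j ∅ = p.s.getD j ∅ := by
    intro j hj
    rw [hs', List.getD_append _ _ _ _ hj]
  have hgetD_ge : ∀ j, p.s.length ≤ j → j < Lnew → s'.getD j ∅ = col j := by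
    intro j h1 h2
    rw [hs', List.getD_append_right _ _ _ _ h1, hext,
      getD_ofFn _ (show j - p.s.length < Lnew - p.s.length by omega)]
    show col (p.s.length + (j - p.s.length)) = col j
    congr 1
    omega
  -- cardinalities
  have hcol_card : ∀ j, p.s.length ≤ j → (col j).card ≤ j := by
    intro j hj
    have hB : (colB p.F j).card ≤ p.F.card := Finset.card_image_le
    have hpF := p.hF
    simp only [hcol]
    split_ifs with hif
    · refine le_trans (Finset.card_insert_le _ _) ?_
      obtain ⟨hodd, h2j, hna⟩ := hif
      by_cases hje : j = p.s.length
      · have hcc : ¬ (p.s.length ≤ (colB p.F p.s.length).card) := by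
          intro hcc
          exact hna (Or.inr ⟨by omega, hcc⟩)
        rw [hje]
        omega
      · omega
    · omega
  -- the new condition
  have hsprop : ∀ n, ∀ _ : n < s'.length, (s'.getD n ∅).card ≤ n := by
    intro n hn
    rw [hs'len] at hn
    by_cases h1 : n < p.s.length
    · rw [hgetD_lt n h1]; exact p.hs n h1
    · rw [hgetD_ge n (by omega) hn]; exact hcol_card n (by omega)
  have hF'card : (insert hfun p.F).card ≤ s'.length := by
    rw [hs'len]
    have := Finset.card_insert_le hfun p.F
    have := p.hF
    omega
  set p' : LOCCond := ⟨s', insert hfun p.F, hsprop, hF'card⟩ with hp'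
  have hp's : p'.s = s' := rfl
  have hp'F : p'.F = insert hfun p.F := rfl
  -- LOCle p' p
  have hle : LOCle p' p := by
    refine ⟨⟨ext, rfl⟩, Finset.subset_insert _ _, ?_⟩
    intro f hf n h1 h2
    rw [hp's] at h2 ⊢
    rw [hs'len] at h2
    rw [hgetD_ge n h1 h2]
    exact hcolB_sub n (Finset.mem_image_of_mem _ hf)
  have hfn : ∀ n, hfun (2*n+2) = q.f n := by
    intro n
    show q.f ((2*n+2-2)/2) = q.f n
    congr 1
    omega
  clear_value T hfun col ext s' p' N Lnew
  -- ell p' = N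
  have hellp' : ell p' = N := by
    unfold ell
    rw [hp's, hs'len]
    rw [if_neg]
    · omega
    · rintro ⟨h1, -⟩
      omega
  -- colmax computations
  have hcm22 : ∀ m, ell p ≤ m → m < N → colmax p' (2*m+2) = colmax p (2*m+2) := by
    intro m h1 h2
    have hlt : 2*m+2 < p'.s.length := by rw [hp's, hs'len]; omega
    unfold colmax
    rw [if_pos hlt, hp's]
    by_cases h3 : 2*m+2 < p.s.length
    · rw [if_pos h3, hgetD_lt _ h3]
    · rw [if_neg h3, hgetD_ge _ (by omega) (by omega)]
      have hc : col (2*m+2) = colB p.F (2*m+2) := by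
        simp only [hcol]
        rw [if_neg]
        rintro ⟨ho, -⟩
        omega
      rw [hc, colB_sup]
  have hWv' : ∀ m, ell p ≤ m → m < N → Wv p' m = T m := by
    intro m h1 h2
    unfold Wv
    rw [hcm22 m h1 h2]
    have hlt : 2*m+3 < p'.s.length := by rw [hp's, hs'len]; omega
    have hge : p.s.length ≤ 2*m+3 := by
      have := len_le_ell p; omega
    have hna : ¬ Active p m := fun ha => by
      rw [active_iff] at ha; omega
    have hmm : (2*m+3 - 2)/2 = m := by omega
    have hcc : col (2*m+3) = insert (T m - colmax p (2*m+2)) (colB p.F (2*m+3)) := by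
      simp only [hcol]
      rw [if_pos ⟨by omega, by omega, by rw [hmm]; exact hna⟩, hmm,
        show 2*m+3-1 = 2*m+2 by omega]
    conv_lhs => rw [show colmax p' (2*m+3) =
      (p'.s.getD (2*m+3) ∅).sup id from by unfold colmax; rw [if_pos hlt]]
    rw [hp's, hgetD_ge _ hge (by rw [hp's, hs'len] at hlt; omega), hcc,
      Finset.sup_insert, colB_sup]
    have hc23 : colmax p (2*m+3) = p.F.sup (fun f => f (2*m+3)) := by
      unfold colmax; rw [if_neg (by omega)]
    rw [← hc23]
    have hW := hTW m h1
    unfold Wv at hW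
    have h1e : colmax p (2*m+3) ≤ T m - colmax p (2*m+2) := by clear * - hW; omega
    simp only [id_eq]
    rw [sup_eq_left.2 h1e]
    clear * - hW
    omega
  have hWvfroz : ∀ m, m < ell p → Wv p' m = Wv p m := fun m hm =>
    Wv_frozen hle ((active_iff _ _).2 hm)
  -- conclude
  refine ⟨p', hle, ?_, ?_, ?_⟩
  · -- q.p <+: (proj p').p
    apply prefix_helper
    apply List.ext_getElem
    · rw [List.length_take, proj_p_length, hellp']
      omega
    · intro i h1 h2
      have hi : i < q.p.length := h1
      rw [List.getElem_take]
      simp only [proj, List.getElem_ofFn]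
      by_cases hip : i < ell p
      · rw [hWvfroz i hip]
        have hilen : i < (proj p).p.length := by rw [proj_p_length]; exact hip
        rw [← hpre.getElem hilen]
        simp only [proj, List.getElem_ofFn]
      · rw [hWv' i (by omega) (by omega)]
        show q.p[i] = T i
        rw [hT]
        simp only [hi, if_pos]
        rw [List.getD_eq_getElem _ _ hi]
  · intro n hn1 hn2
    rw [proj_p_length, hellp'] at hn2
    rw [proj_p_getD _ (by rw [hellp']; omega)]
    rw [hWv' n (by omega) hn2]
    simp [hT, show ¬ n < q.p.length by omega]
  · intro n
    show q.f n ≤ Wv p' n + (if n < ell p' then p'.F.sup (fun f => f (2*n+2)) else 0)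
    have hmem : hfun ∈ p'.F := by rw [hp'F]; exact Finset.mem_insert_self _ _
    have hfn2 : hfun (2*n+2) = q.f n := hfn n
    by_cases hn : n < ell p'
    · rw [if_pos hn]
      have hsup : hfun (2*n+2) ≤ p'.F.sup (fun f => f (2*n+2)) :=
        Finset.le_sup (f := fun f => f (2*n+2)) hmem
      exact le_trans (hfn2 ▸ hsup) (Nat.le_add_left _ _)
    · rw [if_neg hn, Nat.add_zero]
      rw [hellp'] at hn
      have hge : p'.s.length ≤ 2*n+2 := by rw [hp's, hs'len]; omega
      unfold Wv colmax
      rw [if_neg (by omega), if_neg (by omega)]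
      have hsup : hfun (2*n+2) ≤ p'.F.sup (fun f => f (2*n+2)) :=
        Finset.le_sup (f := fun f => f (2*n+2)) hmem
      exact le_trans (hfn2 ▸ hsup) (Nat.le_add_right _ _)

theorem main : ∃ π : LOCCond → DCond, IsProjection LOCle Dle LOCone Done π :=
  ⟨proj, fun _ _ h => proj_mono h, proj_one, proj_proj⟩

end Stmt12

/-- There is a projection from the localization poset to the Hechler poset. -/
theorem stmt_12 : ∃ π : LOCCond → DCond, IsProjection LOCle Dle LOCone Done π := by
  exact Stmt12.main
end

section
/- There exists a projection π from the localization poset LOC to the eventually different poset E. -/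
/-- A condition of eventually different forcing `E`: a finite sequence of naturals
(the stem) together with a finite set of functions `ℕ → ℕ` (the side condition). -/
structure ECond where
  p : List ℕ
  F : Finset (ℕ → ℕ)

/-- The order on `E`. -/
def Ele (q p : ECond) : Prop :=
  p.p <+: q.p ∧ p.F ⊆ q.F ∧
    ∀ f ∈ p.F, ∀ n, p.p.length ≤ n → n < q.p.length → q.p.getD n 0 ≠ f n

/-- The greatest element of `E`. -/
def Eone : ECond := ⟨[], ∅⟩

namespace Proj13

noncomputable instance : DecidableEq (ℕ → ℕ) := Classical.decEq _

/-- Decoding a natural number from a finite set: always avoids the set,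
and any value `v ∉ B` can be realized by inserting one well-chosen element. -/
def dcode (B : Finset ℕ) : ℕ :=
  if (Nat.unpair (B.sup id)).2 ∈ B then B.sup id + 1 else (Nat.unpair (B.sup id)).2

lemma dcode_not_mem (B : Finset ℕ) : dcode B ∉ B := by
  unfold dcode
  split
  · intro h
    have : id (B.sup id + 1) ≤ B.sup id := Finset.le_sup h
    simp only [id] at this
    omega
  · assumption

lemma dcode_insert (B : Finset ℕ) (v : ℕ) (hv : v ∉ B) :
    dcode (insert (Nat.pair (B.sup id + v + 1) v) B) = v := by
  set a := B.sup id + v + 1 with ha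
  set x := Nat.pair a v with hx
  have hax : a ≤ x := Nat.left_le_pair a v
  have hsup : (insert x B).sup id = x := by
    rw [Finset.sup_insert]
    have : B.sup id ≤ x := le_trans (by omega) hax
    simpa using this
  have hux : (Nat.unpair x).2 = v := by rw [hx, Nat.unpair_pair]
  have hvx : v ∉ insert x B := by
    simp only [Finset.mem_insert]
    rintro (h | h)
    · omega
    · exact hv h
  unfold dcode
  rw [hsup, hux, if_neg hvx]

/-- The set of values of members of `F` at `n`. -/
def fv (F : Finset (ℕ → ℕ)) (n : ℕ) : Finset ℕ := F.image fun f => f n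

lemma mem_fv {F : Finset (ℕ → ℕ)} {n : ℕ} {f : ℕ → ℕ} (hf : f ∈ F) : f n ∈ fv F n :=
  Finset.mem_image_of_mem _ hf

/-- The `j`-th entry of the stem associated to a `LOC` condition. -/
def ent (c : LOCCond) (j : ℕ) : ℕ :=
  if j + 1 < c.s.length then dcode (c.s.getD (j+1) ∅) else dcode (fv c.F (j+1))

/-- Whether `c` forces the content of level `c.s.length` (tight case). -/
def Forced (c : LOCCond) : Prop :=
  (fv c.F c.s.length).card = c.s.length ∧ 1 ≤ c.s.length

instance : DecidablePred Forced := fun c => by unfold Forced; infer_instance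

/-- Length of the stem associated to a `LOC` condition. -/
def K (c : LOCCond) : ℕ := if Forced c then c.s.length else c.s.length - 1

lemma K_le (c : LOCCond) : K c ≤ c.s.length := by
  unfold K; split <;> omega

lemma le_K (c : LOCCond) : c.s.length - 1 ≤ K c := by
  unfold K; split <;> omega

/-- The projection map. -/
noncomputable def proj (c : LOCCond) : ECond :=
  ⟨(List.range (K c)).map (ent c), c.F.image fun f j => f (j+1)⟩

lemma proj_len (c : LOCCond) : (proj c).p.length = K c := by simp [proj]

lemma proj_get (c : LOCCond) {j : ℕ} (hj : j < K c) : (proj c).p.getD j 0 = ent c j := by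
  rw [List.getD_eq_getElem _ _ (by simpa [proj] using hj)]
  simp [proj]

-- Basic consequences of `LOCle`
lemma locle_len {t s : LOCCond} (h : LOCle t s) : s.s.length ≤ t.s.length :=
  h.1.length_le

lemma locle_getD {t s : LOCCond} (h : LOCle t s) {n : ℕ} (hn : n < s.s.length) :
    t.s.getD n ∅ = s.s.getD n ∅ := by
  rw [List.getD_eq_getElem _ _ hn, List.getD_eq_getElem _ _ (lt_of_lt_of_le hn (locle_len h))]
  exact (h.1.getElem hn).symm

/-- In the tight case, the level-`L` content of any strict extension is forced. -/
lemma forced_level {t s : LOCCond} (h : LOCle t s) (hf : Forced s)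
    (hl : s.s.length < t.s.length) : t.s.getD s.s.length ∅ = fv s.F s.s.length := by
  have hsub : fv s.F s.s.length ⊆ t.s.getD s.s.length ∅ := by
    intro v hv
    rw [fv, Finset.mem_image] at hv
    obtain ⟨f, hfF, rfl⟩ := hv
    exact h.2.2 f hfF _ le_rfl hl
  exact (Finset.eq_of_subset_of_card_le hsub (by
    calc (t.s.getD s.s.length ∅).card ≤ s.s.length := t.hs _ hl
    _ = (fv s.F s.s.length).card := hf.1.symm)).symm

/-- In the tight case with equal lengths, the side conditions have the same values. -/
lemma forced_fv_eq {t s : LOCCond} (h : LOCle t s) (hf : Forced s)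
    (hl : t.s.length = s.s.length) : fv t.F s.s.length = fv s.F s.s.length := by
  have hsub : fv s.F s.s.length ⊆ fv t.F s.s.length := Finset.image_subset_image h.2.1
  refine (Finset.eq_of_subset_of_card_le hsub ?_).symm
  calc (fv t.F s.s.length).card ≤ t.F.card := Finset.card_image_le
  _ ≤ s.s.length := hl ▸ t.hF
  _ = (fv s.F s.s.length).card := hf.1.symm

lemma ent_stable {t s : LOCCond} (h : LOCle t s) {j : ℕ} (hj : j < K s) :
    ent t j = ent s j := by
  have hL : s.s.length ≤ t.s.length := locle_len h
  have hjL : j + 1 ≤ s.s.length := by have := K_le s; omega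
  rcases lt_or_eq_of_le hjL with hlt | heq
  · unfold ent
    rw [if_pos hlt, if_pos (lt_of_lt_of_le hlt hL), locle_getD h hlt]
  · -- j + 1 = s.s.length; the entry exists only in the forced case
    have hf : Forced s := by
      by_contra hnf
      unfold K at hj
      rw [if_neg hnf] at hj
      omega
    unfold ent
    rw [heq, if_neg (lt_irrefl _)]
    rcases lt_or_eq_of_le hL with hlt | hle
    · rw [if_pos hlt, forced_level h hf hlt]
    · rw [← hle, if_neg (lt_irrefl _), forced_fv_eq h hf hle.symm]

lemma K_mono {t s : LOCCond} (h : LOCle t s) : K s ≤ K t := by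
  have hL : s.s.length ≤ t.s.length := locle_len h
  have h1 := le_K t
  have h2 := K_le t
  by_cases hf : Forced s
  · have hKs : K s = s.s.length := by unfold K; rw [if_pos hf]
    rcases lt_or_eq_of_le hL with hlt | hle
    · omega
    · have hft : Forced t := by
        constructor
        · rw [← hle, forced_fv_eq h hf hle.symm, hf.1, hle]
        · have := hf.2; omega
      have hKt : K t = t.s.length := by unfold K; rw [if_pos hft]
      omega
  · have hKs : K s = s.s.length - 1 := by unfold K; rw [if_neg hf]
    omega

lemma proj_prefix {t s : LOCCond} (h : LOCle t s) : (proj s).p <+: (proj t).p := by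
  have hK := K_mono h
  have : (proj s).p = ((proj t).p).take (K s) := by
    show (List.range (K s)).map (ent s) = ((List.range (K t)).map (ent t)).take (K s)
    rw [← List.map_take, List.take_range, min_eq_left hK]
    exact (List.map_congr_left fun j hj => ent_stable h (List.mem_range.mp hj)).symm
  rw [this]
  exact List.take_prefix _ _

/-- Order preservation. -/
lemma proj_mono {t s : LOCCond} (h : LOCle t s) : Ele (proj t) (proj s) := by
  refine ⟨proj_prefix h, ?_, ?_⟩
  · intro x hx
    simp only [proj, Finset.mem_image] at hx ⊢
    obtain ⟨f, hf, rfl⟩ := hx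
    exact ⟨f, h.2.1 hf, rfl⟩
  intro f' hf' j hj1 hj2
  simp only [proj, Finset.mem_image] at hf'
  obtain ⟨f, hfF, rfl⟩ := hf'
  rw [proj_len] at hj1 hj2
  rw [proj_get t hj2]
  have hKsL : s.s.length - 1 ≤ K s := le_K s
  have hjL : s.s.length ≤ j + 1 := by omega
  have hjL' : j + 1 ≤ t.s.length := by have := K_le t; omega
  unfold ent
  rcases lt_or_eq_of_le hjL' with hlt | heq
  · rw [if_pos hlt]
    intro hc
    have hmem : f (j+1) ∈ t.s.getD (j+1) ∅ := h.2.2 f hfF _ hjL hlt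
    apply dcode_not_mem (t.s.getD (j+1) ∅)
    rw [hc]; exact hmem
  · rw [heq, if_neg (lt_irrefl _)]
    intro hc
    apply dcode_not_mem (fv t.F t.s.length)
    rw [hc]
    show f (j+1) ∈ fv t.F t.s.length
    rw [heq]
    exact mem_fv (h.2.1 hfF)

lemma proj_one : proj LOCone = Eone := by
  have h0 : K LOCone = 0 := by
    unfold K Forced LOCone
    simp
  unfold proj Eone
  rw [h0]
  simp [LOCone]

section Realization

variable (p : LOCCond) (q : ECond)

/-- A value different from all relevant side-condition values. -/
noncomputable def fresh (n : ℕ) : ℕ :=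
  ((fv p.F n ∪ q.F.image fun g => g (n-1)).sup id) + 1

lemma fresh_not {n : ℕ} : fresh p q n ∉ fv p.F n ∪ q.F.image fun g => g (n-1) := by
  intro hmem
  have : id (fresh p q n) ≤ (fv p.F n ∪ q.F.image fun g => g (n-1)).sup id :=
    Finset.le_sup hmem
  simp only [id] at this
  have h2 : fresh p q n = ((fv p.F n ∪ q.F.image fun g => g (n-1)).sup id) + 1 := rfl
  rw [h2] at this
  exact Nat.not_succ_le_self _ this

/-- The value we want the `n-1`-st stem entry of the extension to take. -/
noncomputable def val (n : ℕ) : ℕ :=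
  if n ≤ q.p.length then q.p.getD (n-1) 0 else fresh p q n

/-- The content of the new level `n`. -/
noncomputable def code (n : ℕ) : Finset ℕ :=
  if n ≤ K p then fv p.F n
  else insert (Nat.pair ((fv p.F n).sup id + val p q n + 1) (val p q n)) (fv p.F n)

noncomputable def M : ℕ := max (max p.s.length (q.p.length + 1)) (p.F.card + q.F.card + 1)

lemma L_le_M : p.s.length ≤ M p q := le_trans (le_max_left _ _) (le_max_left _ _)
lemma N_lt_M : q.p.length < M p q := lt_of_lt_of_le (Nat.lt_succ_self _)
  (le_trans (le_max_right _ _) (le_max_left _ _))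
lemma c_lt_M : p.F.card + q.F.card < M p q := lt_of_lt_of_le (Nat.lt_succ_self _)
  (le_max_right _ _)

noncomputable def tlist : List (Finset ℕ) :=
  p.s ++ (List.range (M p q - p.s.length)).map fun i => code p q (p.s.length + i)

lemma tlist_len : (tlist p q).length = M p q := by
  have := L_le_M p q
  simp [tlist]
  omega

lemma tlist_getD_lo {n : ℕ} (hn : n < p.s.length) : (tlist p q).getD n ∅ = p.s.getD n ∅ := by
  rw [List.getD_eq_getElem _ _ (by rw [tlist_len]; exact lt_of_lt_of_le hn (L_le_M p q)),
    List.getD_eq_getElem _ _ hn]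
  exact List.getElem_append_left hn

lemma tlist_getD_hi {n : ℕ} (h1 : p.s.length ≤ n) (h2 : n < M p q) :
    (tlist p q).getD n ∅ = code p q n := by
  rw [List.getD_eq_getElem _ _ (by rw [tlist_len]; exact h2)]
  unfold tlist
  rw [List.getElem_append_right h1]
  simp only [List.getElem_map, List.getElem_range]
  congr 1
  omega

variable {p q}

lemma K_le_N (h : Ele q (proj p)) : K p ≤ q.p.length := by
  have := h.1.length_le
  rwa [proj_len] at this

lemma val_not (h : Ele q (proj p)) {n : ℕ} (hn : K p + 1 ≤ n) : val p q n ∉ fv p.F n := by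
  unfold val
  split
  · rename_i hN
    intro hmem
    rw [fv, Finset.mem_image] at hmem
    obtain ⟨f, hf, hfn⟩ := hmem
    have hf' : (fun j => f (j+1)) ∈ (proj p).F := by
      simp only [proj, Finset.mem_image]
      exact ⟨f, hf, rfl⟩
    have := h.2.2 _ hf' (n-1) (by rw [proj_len]; omega) (by omega)
    rw [show n - 1 + 1 = n by omega] at this
    exact this hfn.symm
  · intro hmem
    exact fresh_not p q (Finset.mem_union_left _ hmem)

lemma val_not_G {g : ℕ → ℕ} (hg : g ∈ q.F) {n : ℕ} (hn : q.p.length + 1 ≤ n) :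
    val p q n ≠ g (n-1) := by
  unfold val
  rw [if_neg (by omega)]
  intro hc
  exact fresh_not p q (Finset.mem_union_right _ (by
    rw [Finset.mem_image]; exact ⟨g, hg, hc.symm⟩))

lemma code_card {n : ℕ} (hn : p.s.length ≤ n) : (code p q n).card ≤ n := by
  have hfvc : (fv p.F n).card ≤ p.F.card := Finset.card_image_le
  have hFc := p.hF
  unfold code
  split
  · omega
  · rename_i hK
    have hcard := Finset.card_insert_le
      (Nat.pair ((fv p.F n).sup id + val p q n + 1) (val p q n)) (fv p.F n)
    rcases lt_or_eq_of_le hn with hlt | hle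
    · omega
    · -- n = p.s.length, and n > K p, so p is not Forced
      have hnL : n = p.s.length := hle.symm
      have hnf : ¬ Forced p := by
        intro hf
        have : K p = p.s.length := by unfold K; rw [if_pos hf]
        omega
      have h1L : 1 ≤ p.s.length := by
        have := K_le p; omega
      have : (fv p.F p.s.length).card ≠ p.s.length := fun hc => hnf ⟨hc, h1L⟩
      rw [hnL] at hfvc hcard ⊢
      have : (fv p.F p.s.length).card ≤ p.s.length - 1 := by omega
      omega

lemma code_dcode (h : Ele q (proj p)) {n : ℕ} (hn : K p + 1 ≤ n) : dcode (code p q n) = val p q n := by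
  unfold code
  rw [if_neg (by omega)]
  exact dcode_insert _ _ (val_not h hn)

lemma code_mem {f : ℕ → ℕ} (hf : f ∈ p.F) (n : ℕ) : f n ∈ code p q n := by
  unfold code
  split
  · exact mem_fv hf
  · exact Finset.mem_insert_of_mem (mem_fv hf)

/-- The extension realizing the `E`-condition `q`. -/
noncomputable def ext (p : LOCCond) (q : ECond) : LOCCond where
  s := tlist p q
  F := p.F ∪ q.F.image fun g n => g (n-1)
  hs := by
    intro n hn
    rw [tlist_len] at hn
    rcases lt_or_ge n p.s.length with hlt | hle
    · rw [tlist_getD_lo p q hlt]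
      exact p.hs n hlt
    · rw [tlist_getD_hi p q hle hn]
      exact code_card hle
  hF := by
    rw [tlist_len]
    calc (p.F ∪ q.F.image fun g n => g (n-1)).card
        ≤ p.F.card + (q.F.image fun g n => g (n-1)).card := Finset.card_union_le _ _
      _ ≤ p.F.card + q.F.card := by
          exact Nat.add_le_add_left Finset.card_image_le _
      _ ≤ M p q := le_of_lt (c_lt_M p q)

lemma ext_le : LOCle (ext p q) p := by
  refine ⟨List.prefix_append _ _, Finset.subset_union_left, ?_⟩
  intro f hf n h1 h2
  show f n ∈ (tlist p q).getD n ∅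
  rw [tlist_getD_hi p q h1 (by rw [← tlist_len p q]; exact h2)]
  exact code_mem hf n

lemma ext_ent_mid (h : Ele q (proj p)) {j : ℕ} (h1 : K p ≤ j) (h2 : j < q.p.length) :
    ent (ext p q) j = q.p.getD j 0 := by
  have hLK := le_K p
  have hjM : j + 1 < M p q := by have := N_lt_M p q; omega
  unfold ent
  rw [if_pos (by rw [show (ext p q).s.length = M p q from tlist_len p q]; exact hjM)]
  show dcode ((tlist p q).getD (j+1) ∅) = _
  rw [tlist_getD_hi p q (by omega) hjM, code_dcode h (by omega)]
  unfold val
  rw [if_pos (by omega)]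
  simp

lemma ext_ent_big (h : Ele q (proj p)) {g : ℕ → ℕ} (hg : g ∈ q.F) {j : ℕ} (h1 : q.p.length ≤ j)
    (h2 : j < K (ext p q)) : ent (ext p q) j ≠ g j := by
  have hKN := K_le_N h
  have hLK := le_K p
  have hlen : (ext p q).s.length = M p q := tlist_len p q
  have hKM : K (ext p q) ≤ M p q := by
    have h6 := K_le (ext p q); rwa [hlen] at h6
  unfold ent
  rcases lt_or_ge (j+1) (M p q) with hlt | hle
  · rw [if_pos (by rw [hlen]; exact hlt)]
    show dcode ((tlist p q).getD (j+1) ∅) ≠ _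
    rw [tlist_getD_hi p q (by have := L_le_M p q; omega) hlt, code_dcode h (by omega)]
    have h7 := val_not_G (p := p) hg (n := j + 1) (by omega)
    simpa using h7
  · have hjM : j + 1 = M p q := by omega
    rw [if_neg (by rw [hlen]; omega)]
    intro hc
    apply dcode_not_mem (fv (ext p q).F (j+1))
    rw [hc]
    have hmem : (fun n => g (n-1)) ∈ (ext p q).F := by
      show _ ∈ p.F ∪ q.F.image fun g n => g (n-1)
      exact Finset.mem_union_right _ (Finset.mem_image_of_mem _ hg)
    have := mem_fv (n := j+1) hmem
    simpa using this

lemma ext_Ele (h : Ele q (proj p)) : Ele (proj (ext p q)) q := by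
  have hKN := K_le_N h
  have hLK := le_K p
  have hlen : (ext p q).s.length = M p q := tlist_len p q
  have hKext : q.p.length ≤ K (ext p q) := by
    have h5 := le_K (ext p q)
    rw [hlen] at h5
    have := N_lt_M p q
    omega
  refine ⟨?_, ?_, ?_⟩
  · have heq : q.p = ((proj (ext p q)).p).take q.p.length := by
      apply List.ext_getElem
      · rw [List.length_take, proj_len]; omega
      · intro j hj1 hj2
        rw [List.getElem_take]
        have hjK : j < K (ext p q) := by omega
        have e1 : (proj (ext p q)).p[j]'(by rw [proj_len]; exact hjK)
            = ent (ext p q) j := by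
          have h4 := proj_get (ext p q) hjK
          rwa [List.getD_eq_getElem _ _ (by rw [proj_len]; exact hjK)] at h4
        rw [e1]
        rcases lt_or_ge j (K p) with hlt | hle
        · have h3 : ent p j = q.p[j]'hj1 := by
            have h2 := h.1.getElem (show j < (proj p).p.length by
              rw [proj_len]; exact hlt)
            rw [← h2]
            have h4 := proj_get p hlt
            rw [List.getD_eq_getElem _ _ (by rw [proj_len]; exact hlt)] at h4
            exact h4.symm
          rw [ent_stable (t := ext p q) (s := p) ext_le hlt]
          exact h3.symm
        · rw [ext_ent_mid h hle hj1, List.getD_eq_getElem _ _ hj1]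
    rw [heq]
    exact List.take_prefix _ _
  · intro g hg
    simp only [proj, Finset.mem_image]
    refine ⟨fun n => g (n-1), Finset.mem_union_right _ (Finset.mem_image_of_mem _ hg), ?_⟩
    funext j
    simp
  · intro g hg n h1 h2
    rw [proj_len] at h2
    rw [proj_get _ h2]
    exact ext_ent_big h hg h1 h2

end Realization

end Proj13

/-- There is a projection from the localization poset to the eventually
different poset. -/
theorem stmt_13 : ∃ π : LOCCond → ECond, IsProjection LOCle Ele LOCone Eone π := by
  refine ⟨Proj13.proj, fun a b hab => Proj13.proj_mono hab, Proj13.proj_one,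
    fun p q hq => ⟨Proj13.ext p q, Proj13.ext_le (p := p) (q := q), Proj13.ext_Ele hq⟩⟩
end
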